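/- arXiv:1706.03208 — 3 statements merged into one kernel-verified Lean document; each statement's English description precedes it below -/
import Mathlib

section
/- Let A be an alternating Büchi automaton, ≼_F a reflexive and transitive forward simulation on A such that A is ≼_F-unambiguous, ≼_B a reflexive and transitive backward simulation on A parametrised by ≼_F, ≼_M a mediated preorder induced by ≼_F and ≼_B, and A+ the automaton extended according to ≼_M. Then for every accepting run T of A+ on a word w ∈ Σ^ω, there exists an accepting run U of A on w. -/
/-- An alternating Büchi automaton over alphabet `σ` with states `Q`:
initial state `ι`, transition function `δ` (where `P ∈ δ q a` means `q →a P`),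
and accepting states `α`. -/
structure ABA (σ Q : Type*) where
  ι : Q
  δ : Q → σ → Set (Set Q)
  α : Set Q

variable {σ Q : Type*}

/-- The assumption `∅ ∉ δ(q, a)` for all `q, a`. -/
def ABA.NoEmpty (A : ABA σ Q) : Prop := ∀ q a, ∅ ∉ A.δ q a

/-- The set of successors of a path `π` in a tree `T ⊆ Q⁺`. -/
def succs (T : Set (List Q)) (π : List Q) : Set Q := {q | π ++ [q] ∈ T}

/-- A tree over `Q`: a set of nonempty finite words over `Q`, closed under nonempty
prefixes and containing exactly one word of length one (its root). -/
structure IsTree (T : Set (List Q)) : Prop where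
  not_nil : [] ∉ T
  prefix_closed : ∀ π ∈ T, ∀ ρ : List Q, ρ <+: π → ρ ≠ [] → ρ ∈ T
  root : ∃! q : Q, [q] ∈ T

/-- The last state of a path (`A.ι` as a dummy for the empty path). -/
def lastSt (A : ABA σ Q) (π : List Q) : Q := π.getLastD A.ι

/-- A partial run of `A` on `w`: a finite tree in which every path either has no
successors or takes a transition of `A` on the appropriate letter of `w`. -/
structure IsPartialRun (A : ABA σ Q) (w : ℕ → σ) (T : Set (List Q)) : Prop where
  tree : IsTree T
  finite : T.Finite
  step : ∀ π ∈ T, succs T π = ∅ ∨ succs T π ∈ A.δ (lastSt A π) (w (π.length - 1))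

/-- A run of `A` on `w`. -/
structure IsRun (A : ABA σ Q) (w : ℕ → σ) (T : Set (List Q)) : Prop where
  tree : IsTree T
  step : ∀ π ∈ T, succs T π ∈ A.δ (lastSt A π) (w (π.length - 1))

/-- A (finite, maximal) branch of a tree. -/
def IsBranch (T : Set (List Q)) (π : List Q) : Prop := π ∈ T ∧ succs T π = ∅

/-- An infinite branch of a tree: all its nonempty finite prefixes belong to the tree. -/
def InfBranch (T : Set (List Q)) (ξ : ℕ → Q) : Prop :=
  ∀ n : ℕ, (List.ofFn fun i : Fin (n + 1) => ξ i) ∈ T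

/-- A run is accepting iff every infinite branch contains infinitely many accepting
states. -/
def Accepting (A : ABA σ Q) (T : Set (List Q)) : Prop :=
  ∀ ξ : ℕ → Q, InfBranch T ξ → ∀ n : ℕ, ∃ m ≥ n, ξ m ∈ A.α

/-- The language of `A`: the infinite words having an accepting run rooted at `ι`. -/
def ABA.Lang (A : ABA σ Q) : Set (ℕ → σ) :=
  {w | ∃ T : Set (List Q), IsRun A w T ∧ [A.ι] ∈ T ∧ Accepting A T}

/-- `p ≼_α r` : `p ∈ α ⇒ r ∈ α`. -/
def αle (A : ABA σ Q) (p r : Q) : Prop := p ∈ A.α → r ∈ A.α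

/-- A forward simulation on `A`. -/
def ForwardSim (A : ABA σ Q) (F : Q → Q → Prop) : Prop :=
  ∀ p r, F p r → (p ∈ A.α → r ∈ A.α) ∧
    ∀ a P, P ∈ A.δ p a → ∃ R ∈ A.δ r a, ∀ r' ∈ R, ∃ p' ∈ P, F p' r'

/-- A backward simulation on `A` parametrised by the forward simulation `F`. -/
def BackwardSim (A : ABA σ Q) (F B : Q → Q → Prop) : Prop :=
  ∀ p r, B p r → (p = A.ι → r = A.ι) ∧ (p ∈ A.α → r ∈ A.α) ∧
    ∀ a q P, p ∉ P → insert p P ∈ A.δ q a →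
      ∃ s R, r ∉ R ∧ insert r R ∈ A.δ s a ∧ B q s ∧ ∀ y ∈ R, ∃ x ∈ P, F x y

/-- `A` is `≼_F`-unambiguous: no transition has two distinct forward-equivalent states
on its right-hand side. -/
def Unambiguous (A : ABA σ Q) (F : Q → Q → Prop) : Prop :=
  ∀ p a P, P ∈ A.δ p a → ∀ q ∈ P, ∀ r ∈ P, q ≠ r → ¬ (F q r ∧ F r q)

/-- `M` is a mediated preorder induced by the forward simulation `F` and the backward
simulation `B`: a preorder containing `F`, contained in `F ∘ B⁻¹` (existence of a
mediator), and forward extensible. -/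
structure IsMediated (F B M : Q → Q → Prop) : Prop where
  refl : Reflexive M
  trans : Transitive M
  le_f : ∀ q r, F q r → M q r
  mediator : ∀ q r, M q r → ∃ s, F q s ∧ B r s
  fwd_ext : ∀ q r s, M q r → F r s → M q s

/-- The automaton `A⁺` extended according to the mediated preorder `M`:
`δ⁺(q, a) = ⋃ {δ(p, a) | p ≼_M q}` and `α⁺ = {p | ∃ q ∈ α, q ≡_M p}`. -/
def extABA (A : ABA σ Q) (M : Q → Q → Prop) : ABA σ Q where
  ι := A.ι
  δ := fun q a => {P | ∃ p, M p q ∧ P ∈ A.δ p a}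
  α := {p | ∃ q ∈ A.α, M q p ∧ M p q}

/-!
Fix a run `T` of `A⁺`. By induction on `d`, for every node `π` of `T` and every `y` with
`last π ≼_M y` there is `r` with `y ≼_B r` from which `A` can follow `T` for `d` steps below `π`,
visiting `α` whenever `T` visits `α⁺`. In the inductive step, the `A⁺`-transition at `π` is an
`A`-transition of some `p ≼_M last π`; a mediator `s` of `p` turns it into an `A`-transition
whose targets are forward-simulated by children of `π`. Each target `z` that cannot yet follow
`T` is then exchanged, through the backward simulation, for the state `r` with `z ≼_B r` given
by the induction hypothesis. This exchange loop terminates because, by `≼_F`-unambiguity, the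
potential `∑ (|Q| + 1) ^ height` of the pending targets strictly decreases.

As `Q` is finite, a pigeonhole argument over the depths yields, at each node, a single choice of
transition that works for all depths; following these choices builds a run of `A` whose every
infinite branch is shadowed by an infinite branch of `T`, and is therefore accepting.
-/

theorem exists_forall_of_antitone {ι : Type*} [Finite ι] {P : ι → ℕ → Prop}
    (hP : ∀ i, Antitone (P i)) (h : ∀ n, ∃ i, P i n) : ∃ i, ∀ n, P i n := by
  by_contra! hne
  have hfail : ∀ᶠ n in Filter.atTop, ∀ i, ¬ P i n :=
    Filter.eventually_all.2 fun i =>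
      let ⟨N, hN⟩ := hne i
      Filter.eventually_atTop.2 ⟨N, fun _ hn hP' => hN (hP i hn hP')⟩
  obtain ⟨n, hn⟩ := hfail.exists
  obtain ⟨i, hi⟩ := h n
  exact hn i hi

theorem List.exists_ofFn_eq_of_forall_eq_concat {α : Type*} {τ : ℕ → List α}
    (h₀ : ∃ a, τ 0 = [a]) (hsucc : ∀ n, ∃ x, τ (n + 1) = τ n ++ [x]) :
    ∃ η : ℕ → α, ∀ n, τ n = List.ofFn fun i : Fin (n + 1) => η i := by
  obtain ⟨a, ha⟩ := h₀
  refine ⟨fun n => (τ n).getLastD a, fun n => ?_⟩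
  induction n with
  | zero => simp [ha]
  | succ n ih =>
    obtain ⟨x, hx⟩ := hsucc n
    rw [List.ofFn_succ', List.concat_eq_append]
    simp only [Fin.val_castSucc, Fin.val_last]
    rw [← ih, hx, List.getLastD_concat]

theorem sum_pow_lt_sum_pow_of_exchange {ι : Type*} [DecidableEq ι] (h : ι → ℕ) {b : ℕ}
    {s t : Finset ι} {z : ι} (hz : z ∈ s) (hmax : ∀ x ∈ s, h x ≤ h z) {g : ι → ι}
    (hg : ∀ y ∈ t, g y ∈ s.erase z ∧ h y ≤ h (g y))
    (hinj : Set.InjOn g {y | y ∈ t ∧ h y = h (g y)}) (hcard : t.card < b) :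
    ∑ y ∈ t, b ^ h y < ∑ x ∈ s, b ^ h x := by
  set te := t.filter fun y => h y = h (g y)
  set tl := t.filter fun y => ¬ h y = h (g y)
  have hte : ∑ y ∈ te, b ^ h y ≤ ∑ x ∈ s.erase z, b ^ h x :=
    calc ∑ y ∈ te, b ^ h y = ∑ y ∈ te, b ^ h (g y) :=
          Finset.sum_congr rfl fun y hy => by rw [(Finset.mem_filter.1 hy).2]
      _ = ∑ x ∈ te.image g, b ^ h x :=
          (Finset.sum_image (f := fun x => b ^ h x) (s := te) fun _ hy _ hy' =>
            hinj (Finset.mem_filter.1 hy) (Finset.mem_filter.1 hy')).symm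
      _ ≤ ∑ x ∈ s.erase z, b ^ h x := by
          refine Finset.sum_le_sum_of_subset fun x hx => ?_
          obtain ⟨y, hy, rfl⟩ := Finset.mem_image.1 hx
          exact (hg y (Finset.mem_filter.1 hy).1).1
  -- each strictly lower term is at most `b ^ (h z - 1)`, and there are fewer than `b` of them
  have htl : (∑ y ∈ tl, b ^ h y) * b ≤ tl.card * b ^ h z := by
    rw [Finset.sum_mul, ← smul_eq_mul, ← Finset.sum_const]
    refine Finset.sum_le_sum fun y hy => ?_
    obtain ⟨hyt, hne⟩ := Finset.mem_filter.1 hy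
    have hlt : h y < h z := (lt_of_le_of_ne (hg y hyt).2 hne).trans_le
      (hmax _ (Finset.mem_of_mem_erase (hg y hyt).1))
    rw [← pow_succ]
    exact Nat.pow_le_pow_right (by omega) hlt
  have htl' : ∑ y ∈ tl, b ^ h y < b ^ h z := by
    refine Nat.lt_of_mul_lt_mul_right (a := b) (htl.trans_lt ?_)
    rw [mul_comm]
    exact Nat.mul_lt_mul_of_pos_left ((Finset.card_filter_le _ _).trans_lt hcard)
      (Nat.pow_pos (by omega))
  calc ∑ y ∈ t, b ^ h y = ∑ y ∈ te, b ^ h y + ∑ y ∈ tl, b ^ h y :=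
        (Finset.sum_filter_add_sum_filter_not _ _ _).symm
    _ < ∑ x ∈ s.erase z, b ^ h x + b ^ h z := by omega
    _ = ∑ x ∈ s, b ^ h x := Finset.sum_erase_add _ _ hz

theorem lastSt_append_singleton (A : ABA σ Q) (ρ : List Q) (q : Q) : lastSt A (ρ ++ [q]) = q :=
  List.getLastD_concat

theorem lastSt_ofFn (A : ABA σ Q) (n : ℕ) (ξ : ℕ → Q) :
    lastSt A (List.ofFn fun i : Fin (n + 1) => ξ i) = ξ n := by
  rw [List.ofFn_succ', List.concat_eq_append, lastSt_append_singleton, Fin.val_last]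

section Height

variable {F : Q → Q → Prop}

noncomputable def fwdHeight (F : Q → Q → Prop) (x : Q) : ℕ := {t | F x t}.ncard

theorem fwdHeight_le [Finite Q] (hFt : Transitive F) {x y : Q} (h : F x y) :
    fwdHeight F y ≤ fwdHeight F x :=
  Set.ncard_le_ncard fun _ ht => hFt h ht

theorem rel_of_fwdHeight_eq [Finite Q] (hFr : Reflexive F) (hFt : Transitive F) {x y : Q}
    (h : F x y) (heq : fwdHeight F y = fwdHeight F x) : F y x := by
  have hsub : {t | F y t} ⊆ {t | F x t} := fun _ ht => hFt h ht
  have hx : x ∈ {t | F x t} := hFr x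
  rwa [← Set.eq_of_subset_of_ncard_le hsub heq.ge] at hx

end Height

section ReplacementLoop

variable [Finite Q] {A : ABA σ Q} {F B : Q → Q → Prop} {D : Q → Prop}

noncomputable def pendingPotential (F : Q → Q → Prop) (D : Q → Prop) (X : Set Q) : ℕ :=
  ∑ x ∈ (Set.toFinite {x ∈ X | ¬ D x}).toFinset, (Nat.card Q + 1) ^ fwdHeight F x

-- A pending target of `Y` is either strictly lower than `z` or, by unambiguity, matched
-- injectively with a pending target of `X` other than `z`, of the same height.
theorem pendingPotential_lt (hFr : Reflexive F) (hFt : Transitive F)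
    (hunamb : Unambiguous A F) (hD : ∀ x y, F x y → D x → D y) {s : Q} {a : σ} {X Y : Set Q}
    (hY : Y ∈ A.δ s a) {z : Q} (hzX : z ∈ X) (hzD : ¬ D z)
    (hzmax : ∀ x ∈ X, ¬ D x → fwdHeight F x ≤ fwdHeight F z)
    (hYX : ∀ y ∈ Y, ¬ D y → ∃ x ∈ X, x ≠ z ∧ F x y) :
    pendingPotential F D Y < pendingPotential F D X := by
  classical
  choose! g hgX hgz hgF using hYX
  refine sum_pow_lt_sum_pow_of_exchange (fwdHeight F) (by simpa using ⟨hzX, hzD⟩)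
    (fun x hx => by simp only [Set.Finite.mem_toFinset] at hx; exact hzmax x hx.1 hx.2)
    (g := g) (fun y hy => ?_) ?_ ?_
  · simp only [Set.Finite.mem_toFinset, Set.mem_ofPred_eq] at hy
    refine ⟨?_, fwdHeight_le hFt (hgF y hy.1 hy.2)⟩
    simp only [Finset.mem_erase, Set.Finite.mem_toFinset, Set.mem_ofPred_eq]
    exact ⟨hgz y hy.1 hy.2, hgX y hy.1 hy.2, fun h => hy.2 (hD _ _ (hgF y hy.1 hy.2) h)⟩
  · rintro y ⟨hy, hyh⟩ y' ⟨hy', hyh'⟩ hgy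
    simp only [Set.Finite.mem_toFinset, Set.mem_ofPred_eq] at hy hy'
    have hyg := rel_of_fwdHeight_eq hFr hFt (hgF y hy.1 hy.2) hyh
    have hyg' := rel_of_fwdHeight_eq hFr hFt (hgF y' hy'.1 hy'.2) hyh'
    by_contra hne
    exact hunamb _ _ _ hY y hy.1 y' hy'.1 hne
      ⟨hFt hyg (hgy ▸ hgF y' hy'.1 hy'.2), hFt hyg' (hgy ▸ hgF y hy.1 hy.2)⟩
  · exact Nat.lt_succ_of_le ((Set.ncard_coe_finset _).symm.trans_le (Set.ncard_le_card _))

theorem BackwardSim.exists_pendingPotential_lt (hB : BackwardSim A F B) (hFr : Reflexive F)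
    (hFt : Transitive F) (hunamb : Unambiguous A F) {C : Q → Prop}
    (hD : ∀ x y, F x y → D x → D y) (hC : ∀ x y, F x y → C x → C y)
    (hCD : ∀ z, C z → ∃ r, B z r ∧ D r) {s : Q} {a : σ} {X : Set Q} (hX : X ∈ A.δ s a)
    (hXDC : ∀ x ∈ X, D x ∨ C x) (hpend : ∃ x ∈ X, ¬ D x) :
    ∃ s₂ X₂, B s s₂ ∧ X₂ ∈ A.δ s₂ a ∧ (∀ y ∈ X₂, D y ∨ C y) ∧
      pendingPotential F D X₂ < pendingPotential F D X := by
  classical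
  obtain ⟨z, ⟨hzX, hzD⟩, hzmax⟩ :=
    Set.exists_max_image _ (fwdHeight F) (Set.toFinite {x ∈ X | ¬ D x}) hpend
  obtain ⟨r, hzr, hr⟩ := hCD z ((hXDC z hzX).resolve_left hzD)
  -- replace the pending target `z` by `r`, which backward-simulates it and satisfies `D`
  obtain ⟨s₂, R, -, hR, hss₂, hRX⟩ := (hB z r hzr).2.2 a s (X \ {z}) (by simp)
    (by rwa [Set.insert_sdiff_singleton, Set.insert_eq_of_mem hzX])
  refine ⟨s₂, insert r R, hss₂, hR, ?_, pendingPotential_lt hFr hFt hunamb hD hR hzX hzD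
    (fun x hx hxD => ?_) ?_⟩
  · rintro y (rfl | hy)
    · exact Or.inl hr
    · obtain ⟨x, hx, hxy⟩ := hRX y hy
      exact (hXDC x hx.1).imp (hD x y hxy) (hC x y hxy)
  · exact hzmax x ⟨hx, hxD⟩
  · rintro y (rfl | hy) hyD
    · exact absurd hr hyD
    · obtain ⟨x, hx, hxy⟩ := hRX y hy
      exact ⟨x, hx.1, hx.2, hxy⟩

theorem BackwardSim.exists_transition_forall (hB : BackwardSim A F B) (hBr : Reflexive B)
    (hBt : Transitive B) (hFr : Reflexive F) (hFt : Transitive F) (hunamb : Unambiguous A F)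
    {C : Q → Prop} (hD : ∀ x y, F x y → D x → D y) (hC : ∀ x y, F x y → C x → C y)
    (hCD : ∀ z, C z → ∃ r, B z r ∧ D r) {s : Q} {a : σ} {X : Set Q} (hX : X ∈ A.δ s a)
    (hXDC : ∀ x ∈ X, D x ∨ C x) :
    ∃ s' X', B s s' ∧ (s ∈ A.α → s' ∈ A.α) ∧ X' ∈ A.δ s' a ∧ ∀ x ∈ X', D x := by
  induction hn : pendingPotential F D X using Nat.strong_induction_on generalizing s X with
  | _ n ih =>
  by_cases hpend : ∃ x ∈ X, ¬ D x
  · obtain ⟨s₂, X₂, hss₂, hX₂, hX₂DC, hlt⟩ :=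
      hB.exists_pendingPotential_lt hFr hFt hunamb hD hC hCD hX hXDC hpend
    obtain ⟨s', X', hs₂s', hα, hX', hX'D⟩ := ih _ (hn ▸ hlt) hX₂ hX₂DC rfl
    exact ⟨s', X', hBt hss₂ hs₂s', fun hs => hα ((hB s s₂ hss₂).2.1 hs), hX', hX'D⟩
  · push Not at hpend
    exact ⟨s, X, hBr s, id, hX, hpend⟩

end ReplacementLoop

def Tracks (A : ABA σ Q) (α' : Set Q) (w : ℕ → σ) (T : Set (List Q)) : ℕ → List Q → Q → Prop
  | 0, π, r => π ∈ T ∧ (lastSt A π ∈ α' → r ∈ A.α)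
  | d + 1, π, r => (π ∈ T ∧ (lastSt A π ∈ α' → r ∈ A.α)) ∧
      ∃ R ∈ A.δ r (w (π.length - 1)), ∀ y ∈ R, ∃ c, Tracks A α' w T d (π ++ [c]) y

namespace Tracks

variable {A : ABA σ Q} {α' : Set Q} {w : ℕ → σ} {T : Set (List Q)}

theorem base {d : ℕ} {π : List Q} {r : Q} (h : Tracks A α' w T d π r) :
    π ∈ T ∧ (lastSt A π ∈ α' → r ∈ A.α) := by
  cases d <;> unfold Tracks at h
  exacts [h, h.1]

theorem antitone {π : List Q} {r : Q} : Antitone fun d => Tracks A α' w T d π r := by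
  refine antitone_nat_of_succ_le fun d => ?_
  induction d generalizing π r with
  | zero => exact fun h => by unfold Tracks at h; exact h.1
  | succ d ih =>
    intro h
    unfold Tracks at h ⊢
    obtain ⟨h₀, R, hR, hchild⟩ := h
    exact ⟨h₀, R, hR, fun y hy => (hchild y hy).imp fun c => @ih _ _⟩

theorem of_forwardSim {F : Q → Q → Prop} (hF : ForwardSim A F) {d : ℕ} {π : List Q}
    {x x' : Q} (h : Tracks A α' w T d π x) (hxx' : F x x') : Tracks A α' w T d π x' := by
  induction d generalizing π x x' with
  | zero =>
    unfold Tracks at h ⊢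
    exact ⟨h.1, fun hπ => (hF x x' hxx').1 (h.2 hπ)⟩
  | succ d ih =>
    unfold Tracks at h ⊢
    obtain ⟨⟨hπT, hacc⟩, R, hR, hchild⟩ := h
    obtain ⟨R', hR', hR'R⟩ := (hF x x' hxx').2 _ R hR
    refine ⟨⟨hπT, fun hπ => (hF x x' hxx').1 (hacc hπ)⟩, R', hR', fun y' hy' => ?_⟩
    obtain ⟨y, hy, hyy'⟩ := hR'R y' hy'
    obtain ⟨c, hc⟩ := hchild y hy
    exact ⟨c, ih hc hyy'⟩

theorem exists_transition_of_forall [Finite Q] {π : List Q} {r : Q}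
    (h : ∀ d, Tracks A α' w T d π r) :
    ∃ R ∈ A.δ r (w (π.length - 1)), ∀ y ∈ R, ∃ c, ∀ d, Tracks A α' w T d (π ++ [c]) y := by
  have hchoice : ∀ d, ∃ Rc : Set Q × (Q → Q), Rc.1 ∈ A.δ r (w (π.length - 1)) ∧
      ∀ y ∈ Rc.1, Tracks A α' w T d (π ++ [Rc.2 y]) y := by
    intro d
    have hd := h (d + 1)
    unfold Tracks at hd
    obtain ⟨-, R, hR, hchild⟩ := hd
    choose! c hc using hchild
    exact ⟨(R, c), hR, hc⟩
  obtain ⟨⟨R, c⟩, hRc⟩ := exists_forall_of_antitone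
    (fun _ _ _ hmn hn => ⟨hn.1, fun y hy => antitone hmn (hn.2 y hy)⟩) hchoice
  exact ⟨R, (hRc 0).1, fun y hy => ⟨c y, fun d => (hRc d).2 y hy⟩⟩

end Tracks

/-- The paths `ρ` of the run of `A` determined by the choices `next` of transitions and `child`
of nodes in a shadow tree, each paired with the shadow path `τ` that it follows. -/
inductive ShadowPath (A : ABA σ Q) (next : List Q → Q → Set Q) (child : List Q → Q → Q → Q)
    (q₀ r₀ : Q) : List Q → List Q → Prop
  | root : ShadowPath A next child q₀ r₀ [r₀] [q₀]
  | snoc {ρ τ : List Q} {y : Q} : ShadowPath A next child q₀ r₀ ρ τ →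
      y ∈ next τ (lastSt A ρ) →
      ShadowPath A next child q₀ r₀ (ρ ++ [y]) (τ ++ [child τ (lastSt A ρ) y])

namespace ShadowPath

variable {A : ABA σ Q} {next : List Q → Q → Set Q} {child : List Q → Q → Q → Q} {q₀ r₀ : Q}
  {ρ τ : List Q}

theorem ne_nil (h : ShadowPath A next child q₀ r₀ ρ τ) : ρ ≠ [] := by
  cases h <;> simp

theorem length_eq (h : ShadowPath A next child q₀ r₀ ρ τ) : τ.length = ρ.length := by
  induction h with
  | root => rfl
  | snoc _ _ ih => simp [ih]

theorem singleton_iff {q : Q} : ShadowPath A next child q₀ r₀ [q] τ ↔ q = r₀ ∧ τ = [q₀] := by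
  refine ⟨fun h => ?_, by rintro ⟨rfl, rfl⟩; exact root⟩
  generalize hq : [q] = ρ at h
  cases h with
  | root => exact ⟨List.singleton_inj.1 hq, rfl⟩
  | snoc hρ _ => exact absurd (by simpa using congrArg List.length hq.symm) hρ.ne_nil

theorem snoc_iff {y : Q} {τ' : List Q} (hρ : ρ ≠ []) :
    ShadowPath A next child q₀ r₀ (ρ ++ [y]) τ' ↔
      ∃ τ, ShadowPath A next child q₀ r₀ ρ τ ∧ y ∈ next τ (lastSt A ρ) ∧
        τ' = τ ++ [child τ (lastSt A ρ) y] := by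
  refine ⟨fun h => ?_, by rintro ⟨τ, hτ, hy, rfl⟩; exact hτ.snoc hy⟩
  generalize hρy : ρ ++ [y] = ρ' at h
  cases h with
  | root => exact absurd (by simpa using congrArg List.length hρy) hρ
  | snoc hρ' hy' =>
    obtain ⟨rfl, hy⟩ := List.append_inj' hρy rfl
    obtain rfl := List.singleton_inj.1 hy
    exact ⟨_, hρ', hy', rfl⟩

theorem unique {τ₁ τ₂ : List Q} (h₁ : ShadowPath A next child q₀ r₀ ρ τ₁)
    (h₂ : ShadowPath A next child q₀ r₀ ρ τ₂) : τ₁ = τ₂ := by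
  induction h₁ generalizing τ₂ with
  | root => exact (singleton_iff.1 h₂).2.symm
  | snoc hρ _ ih =>
    obtain ⟨τ, hτ, -, rfl⟩ := (snoc_iff hρ.ne_nil).1 h₂
    rw [ih hτ]

theorem exists_of_prefix {ρ' : List Q} (h : ShadowPath A next child q₀ r₀ ρ τ) (hρ' : ρ' <+: ρ)
    (hne : ρ' ≠ []) : ∃ τ', ShadowPath A next child q₀ r₀ ρ' τ' := by
  induction h with
  | root =>
    obtain rfl | hnil := List.prefix_concat_iff (l₂ := []).1 hρ'
    · exact ⟨_, root⟩
    · exact absurd (List.prefix_nil.1 hnil) hne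
  | snoc hρ hy ih =>
    obtain rfl | hρ' := List.prefix_concat_iff.1 hρ'
    · exact ⟨_, hρ.snoc hy⟩
    · exact ih hρ'

theorem succs_eq (h : ShadowPath A next child q₀ r₀ ρ τ) :
    succs {ρ | ∃ τ, ShadowPath A next child q₀ r₀ ρ τ} ρ = next τ (lastSt A ρ) := by
  ext y
  refine ⟨fun ⟨τ', hτ'⟩ => ?_, fun hy => ⟨_, h.snoc hy⟩⟩
  obtain ⟨τ'', hτ'', hy, -⟩ := (snoc_iff h.ne_nil).1 hτ'
  rwa [hτ''.unique h] at hy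

theorem isTree : IsTree {ρ | ∃ τ, ShadowPath A next child q₀ r₀ ρ τ} where
  not_nil := fun ⟨_, h⟩ => h.ne_nil rfl
  prefix_closed := fun _ ⟨_, h⟩ _ hρ' hne => h.exists_of_prefix hρ' hne
  root := ⟨r₀, ⟨_, root⟩, fun _ ⟨_, hq⟩ => (singleton_iff.1 hq).1⟩

theorem exists_ofFn_of_infBranch {ξ : ℕ → Q}
    (hξ : InfBranch {ρ | ∃ τ, ShadowPath A next child q₀ r₀ ρ τ} ξ) :
    ∃ η : ℕ → Q, ∀ n, ShadowPath A next child q₀ r₀ (List.ofFn fun i : Fin (n + 1) => ξ i)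
      (List.ofFn fun i : Fin (n + 1) => η i) := by
  choose τ hτ using hξ
  have hsnoc : ∀ n, ∃ x, τ (n + 1) = τ n ++ [x] := by
    intro n
    have h := hτ (n + 1)
    rw [List.ofFn_succ', List.concat_eq_append] at h
    obtain ⟨τ', hτ', -, hτeq⟩ := (snoc_iff (hτ n).ne_nil).1 h
    exact ⟨_, hτeq.trans (by rw [hτ'.unique (hτ n)])⟩
  obtain ⟨η, hη⟩ := List.exists_ofFn_eq_of_forall_eq_concat ⟨q₀, (singleton_iff.1 (hτ 0)).2⟩ hsnoc
  exact ⟨η, fun n => hη n ▸ hτ n⟩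

end ShadowPath

theorem exists_isRun_of_shadow (A : ABA σ Q) (w : ℕ → σ) (S : List Q → Q → Prop)
    (hS : ∀ π r, S π r → ∃ R ∈ A.δ r (w (π.length - 1)), ∀ y ∈ R, ∃ c, S (π ++ [c]) y)
    {q₀ r₀ : Q} (h₀ : S [q₀] r₀) :
    ∃ U, IsRun A w U ∧ ∀ ξ, InfBranch U ξ →
      ∃ η : ℕ → Q, ∀ n, S (List.ofFn fun i : Fin (n + 1) => η i) (ξ n) := by
  have : Nonempty Q := ⟨q₀⟩
  choose! next hnext child hchild using hS
  have hinv : ∀ {ρ τ}, ShadowPath A next child q₀ r₀ ρ τ → S τ (lastSt A ρ) := by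
    intro ρ τ h
    induction h with
    | root => exact h₀
    | snoc _ hy ih => rw [lastSt_append_singleton]; exact hchild _ _ ih _ hy
  refine ⟨{ρ | ∃ τ, ShadowPath A next child q₀ r₀ ρ τ}, ⟨ShadowPath.isTree, ?_⟩, ?_⟩
  · rintro ρ ⟨τ, h⟩
    rw [h.succs_eq, ← h.length_eq]
    exact hnext _ _ (hinv h)
  · intro ξ hξ
    obtain ⟨η, hη⟩ := ShadowPath.exists_ofFn_of_infBranch hξ
    exact ⟨η, fun n => by rw [← lastSt_ofFn A n ξ]; exact hinv (hη n)⟩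

theorem IsMediated.exists_backwardSim_accepting {A : ABA σ Q} {F B M : Q → Q → Prop}
    (hF : ForwardSim A F) (hBr : Reflexive B) (hM : IsMediated F B M) {q y : Q}
    (hqy : M q y) :
    ∃ y₁, B y y₁ ∧ (q ∈ (extABA A M).α → y₁ ∈ A.α) ∧ ∀ p, M p q → M p y₁ := by
  by_cases hq : q ∈ (extABA A M).α
  · obtain ⟨x, hxα, hxq, hqx⟩ := hq
    obtain ⟨t, hxt, hyt⟩ := hM.mediator x y (hM.trans hxq hqy)
    exact ⟨t, hyt, fun _ => (hF x t hxt).1 hxα,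
      fun p hpq => hM.fwd_ext _ _ _ (hM.trans hpq hqx) hxt⟩
  · exact ⟨y, hBr y, fun h => absurd h hq, fun p hpq => hM.trans hpq hqy⟩

theorem exists_backwardSim_tracks [Finite Q] {A : ABA σ Q} {F B M : Q → Q → Prop}
    (hFr : Reflexive F) (hFt : Transitive F) (hF : ForwardSim A F)
    (hunamb : Unambiguous A F) (hBr : Reflexive B) (hBt : Transitive B)
    (hB : BackwardSim A F B) (hM : IsMediated F B M) {w : ℕ → σ} {T : Set (List Q)}
    (hT : IsRun (extABA A M) w T) (d : ℕ) {π : List Q} (hπ : π ∈ T) {y : Q}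
    (hy : M (lastSt A π) y) : ∃ r, B y r ∧ Tracks A (extABA A M).α w T d π r := by
  induction d generalizing π y with
  | zero =>
    obtain ⟨y₁, hyy₁, hacc, -⟩ := hM.exists_backwardSim_accepting hF hBr hy
    exact ⟨y₁, hyy₁, hπ, hacc⟩
  | succ d ih =>
    obtain ⟨y₁, hyy₁, hacc, hMy₁⟩ := hM.exists_backwardSim_accepting hF hBr hy
    obtain ⟨p, hp, hpT⟩ := hT.step π hπ
    obtain ⟨s, hps, hy₁s⟩ := hM.mediator p y₁ (hMy₁ p hp)
    obtain ⟨R, hR, hRT⟩ := (hF p s hps).2 _ _ hpT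
    obtain ⟨s', X', hss', hα, hX', hX'D⟩ := hB.exists_transition_forall hBr hBt hFr hFt hunamb
      (D := fun z => ∃ c, Tracks A (extABA A M).α w T d (π ++ [c]) z)
      (C := fun z => ∃ c, π ++ [c] ∈ T ∧ F c z)
      (fun x y hxy ⟨c, hc⟩ => ⟨c, hc.of_forwardSim hF hxy⟩)
      (fun x y hxy ⟨c, hcT, hcx⟩ => ⟨c, hcT, hFt hcx hxy⟩)
      (fun z ⟨c, hcT, hcz⟩ => (ih hcT (by rw [lastSt_append_singleton]; exact hM.le_f c z hcz)).imp
        fun r ⟨hzr, hr⟩ => ⟨hzr, c, hr⟩)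
      hR (fun z hz => Or.inr (hRT z hz))
    refine ⟨s', hBt hyy₁ (hBt hy₁s hss'), ?_⟩
    unfold Tracks
    exact ⟨⟨hπ, fun h => hα ((hB y₁ s hy₁s).2.1 (hacc h))⟩, X', hX', hX'D⟩

theorem stmt_16_general [Finite Q] (A : ABA σ Q)
    (F B M : Q → Q → Prop)
    (hFr : Reflexive F) (hFt : Transitive F) (hF : ForwardSim A F)
    (hunamb : Unambiguous A F)
    (hBr : Reflexive B) (hBt : Transitive B) (hB : BackwardSim A F B)
    (hM : IsMediated F B M)
    (w : ℕ → σ) (T : Set (List Q))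
    (hT : IsRun (extABA A M) w T) (hacc : Accepting (extABA A M) T) :
    ∃ U : Set (List Q), IsRun A w U ∧ Accepting A U := by
  obtain ⟨q₀, hq₀, -⟩ := hT.tree.root
  obtain ⟨r₀, hr₀⟩ := exists_forall_of_antitone (fun _ => Tracks.antitone) fun d =>
    (exists_backwardSim_tracks hFr hFt hF hunamb hBr hBt hB hM hT d hq₀ (hM.refl _)).imp
      fun _ => And.right
  obtain ⟨U, hU, hshadow⟩ := exists_isRun_of_shadow A w _
    (fun _ _ => Tracks.exists_transition_of_forall) hr₀
  refine ⟨U, hU, fun ξ hξ n => ?_⟩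
  obtain ⟨η, hη⟩ := hshadow ξ hξ
  obtain ⟨m, hmn, hm⟩ := hacc η (fun k => (hη k 0).base.1) n
  exact ⟨m, hmn, (hη m 0).base.2 (by rwa [lastSt_ofFn])⟩

/-- For every accepting run `T` of `A⁺` on `w` there exists an accepting run `U` of `A`
on `w`. -/
theorem stmt_16 [Finite σ] [Finite Q] (A : ABA σ Q) (hne : A.NoEmpty)
    (F B M : Q → Q → Prop)
    (hFr : Reflexive F) (hFt : Transitive F) (hF : ForwardSim A F)
    (hunamb : Unambiguous A F)
    (hBr : Reflexive B) (hBt : Transitive B) (hB : BackwardSim A F B)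
    (hM : IsMediated F B M)
    (w : ℕ → σ) (T : Set (List Q))
    (hT : IsRun (extABA A M) w T) (hacc : Accepting (extABA A M) T) :
    ∃ U : Set (List Q), IsRun A w U ∧ Accepting A U :=
  stmt_16_general A F B M hFr hFt hF hunamb hBr hBt hB hM w T hT hacc
end

section
/- Let A be an alternating Büchi automaton, ≼_F a reflexive and transitive forward simulation on A such that A is ≼_F-unambiguous, ≼_B a reflexive and transitive backward simulation on A parametrised by ≼_F, ≼_M a mediated preorder induced by ≼_F and ≼_B, and ≡_M = ≼_M ∩ ≼_M^{-1} the mediated equivalence. Then quotienting A with respect to ≡_M preserves the language: L(A/≡_M) = L(A). -/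
variable {σ Q : Type*}

/-- The quotient automaton `A/≡` of `A` by the equivalence `e`. -/
def quotABA (A : ABA σ Q) (e : Q → Q → Prop) : ABA σ (Quot e) where
  ι := Quot.mk e A.ι
  δ := fun x a => {S | ∃ p, Quot.mk e p = x ∧ ∃ P ∈ A.δ p a, S = Quot.mk e '' P}
  α := Quot.mk e '' A.α

/-! The run of `A/≡_M` on a word lifts to a run of the automaton `A⁺` (`extABA A M`), in which
`q` may take every transition of every `p ≼_M q`; conversely `L(A) ⊆ L(A/≡)` holds for every
quotient. The heart of the proof is `L(A⁺) ⊆ L(A)`. Given an accepting run of `A⁺`, one builds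
for every depth `k` a run of `A` cut off at depth `k` that shadows it. To go one level deeper, a
leaf `q` whose `A⁺`-transition came from `p ≼_M q` is replaced by the mediator `s` of `p` and
`q`: `s` forward-simulates the transition of `p`, and `q ≼_B s` lets the parent's transition be
changed, by the backward simulation, into one containing `s` instead of `q`. These replacements
propagate up to the root, which stays `ι`, and unambiguity makes each round of them terminate.
An accepting state of `A⁺` is `≡_M`-equivalent to one of `α`; routing the mediators through it
keeps the replacement accepting. Since `Q` is finite, the truncated runs have a limit by
compactness, and it is an accepting run of `A`. -/

lemma List.ofFn_getD_eq_take (o : List Q) (d : Q) {n : ℕ} (hn : n ≤ o.length) :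
    List.ofFn (fun i : Fin n => o.getD i d) = o.take n := by
  apply List.ext_getElem (by simp; omega)
  intro i h1 _
  simp only [List.length_ofFn] at h1
  simp [List.getElem?_eq_getElem (show i < o.length by omega)]

lemma List.ofFn_succ_eq_append (ξ : ℕ → Q) (n : ℕ) :
    (List.ofFn fun i : Fin (n + 2) => ξ i) =
      (List.ofFn fun i : Fin (n + 1) => ξ i) ++ [ξ (n + 1)] := by
  rw [List.ofFn_succ', List.concat_eq_append]
  rfl

lemma List.getLastD_ofFn (ξ : ℕ → Q) (n : ℕ) (d : Q) :
    (List.ofFn fun i : Fin (n + 1) => ξ i).getLastD d = ξ n := by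
  cases n with
  | zero => rfl
  | succ n => rw [List.ofFn_succ_eq_append, List.getLastD_concat]

lemma List.getD_ofFn (ξ : ℕ → Q) {i n : ℕ} (hi : i < n) (d : Q) :
    (List.ofFn fun j : Fin n => ξ j).getD i d = ξ i := by
  rw [List.getD_eq_getElem _ _ (by simpa), List.getElem_ofFn]

lemma List.ofFn_getLastD_eq (P : ℕ → List Q) (d : Q) (h₀ : ∃ a, P 0 = [a])
    (hsucc : ∀ n, ∃ a, P (n + 1) = P n ++ [a]) (n : ℕ) :
    (List.ofFn fun i : Fin (n + 1) => (P i).getLastD d) = P n := by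
  induction n with
  | zero =>
    obtain ⟨a, ha⟩ := h₀
    simp [ha]
  | succ n ih =>
    obtain ⟨a, ha⟩ := hsucc n
    rw [List.ofFn_succ_eq_append (fun i => (P i).getLastD d), ih, ha, List.getLastD_concat]

lemma List.IsPrefix.getD_eq {l l' : List Q} (h : l <+: l') {i : ℕ} (hi : i < l.length)
    (d : Q) : l'.getD i d = l.getD i d := by
  obtain ⟨t, rfl⟩ := h
  exact List.getD_append _ _ _ _ hi

lemma lastSt_cons (A : ABA σ Q) (q : Q) {π : List Q} (hπ : π ≠ []) :
    lastSt A (q :: π) = lastSt A π := by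
  simp [lastSt, List.getLastD_eq_getLast?, List.getLast?_cons, List.getLast?_eq_some_getLast hπ]

open Filter Topology in
lemma exists_frequently_eqOn {X Y : Type*} [Finite Y] (f : ℕ → X → Y) :
    ∃ g : X → Y, ∀ I : Set X, I.Finite → ∀ k, ∃ n ≥ k, Set.EqOn (f n) g I := by
  let _ : TopologicalSpace Y := ⊥
  have : DiscreteTopology Y := ⟨rfl⟩
  obtain ⟨g, hg⟩ := exists_clusterPt_of_compactSpace (map f atTop)
  refine ⟨g, fun I hI k => ?_⟩
  have hU : I.pi (fun x => {g x}) ∈ 𝓝 g :=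
    (isOpen_set_pi hI fun _ _ => isOpen_discrete _).mem_nhds fun _ _ => rfl
  exact frequently_atTop.mp (clusterPt_iff_frequently.mp hg _ hU) k

lemma IsTree.take_mem {T : Set (List Q)} (hT : IsTree T) {π : List Q} (hπ : π ∈ T) {n : ℕ}
    (hn : n ≠ 0) : π.take n ∈ T := by
  refine hT.prefix_closed π hπ _ (List.take_prefix n π) ?_
  intro h
  rw [List.take_eq_nil_iff] at h
  rcases h with h | rfl
  · exact hn h
  · exact hT.not_nil hπ

/-- König's lemma, in compactness form: otherwise the bad paths accumulate at an infinite branch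
of `T` that avoids `α` after `n₀`. -/
lemma Accepting.exists_bound [Finite Q] {A : ABA σ Q} {T : Set (List Q)} (hT : IsTree T)
    (hacc : Accepting A T) (n₀ : ℕ) :
    ∃ K, ∀ o ∈ T, o.length = K + 1 → ∃ i ≥ n₀, i ≤ K ∧ o.getD i A.ι ∈ A.α := by
  by_contra! hbad
  choose o hoT holen hoα using hbad
  obtain ⟨ξ, hξ⟩ := exists_frequently_eqOn fun K i => (o K).getD i A.ι
  have hclose : ∀ n, ∃ K ≥ n, ∀ i ≤ n, (o K).getD i A.ι = ξ i := fun n => by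
    obtain ⟨K, hK, heq⟩ := hξ (Set.Iic n) (Set.finite_Iic n) n
    exact ⟨K, hK, fun i hi => heq hi⟩
  have hbranch : InfBranch T ξ := fun n => by
    obtain ⟨K, hK, heq⟩ := hclose n
    have : (List.ofFn fun i : Fin (n + 1) => ξ i) = (o K).take (n + 1) := by
      rw [← List.ofFn_getD_eq_take _ A.ι (by rw [holen K]; omega)]
      exact List.ofFn_inj.mpr (funext fun i => (heq i (by omega)).symm)
    rw [this]
    exact hT.take_mem (hoT K) (by omega)
  obtain ⟨m, hm, hξm⟩ := hacc ξ hbranch n₀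
  obtain ⟨K, hK, heq⟩ := hclose m
  exact hoα K m hm hK (heq m le_rfl ▸ hξm)

lemma IsTree.of_agree {T : ℕ → Set (List Q)} {L : Set (List Q)} (hT : ∀ n, IsTree (T n))
    (hL : ∀ k, ∃ n, ∀ π : List Q, π.length ≤ k → (π ∈ T n ↔ π ∈ L)) : IsTree L where
  not_nil h := by
    obtain ⟨n, hn⟩ := hL 0
    exact (hT n).not_nil ((hn [] le_rfl).mpr h)
  prefix_closed π hπ ρ hρπ hρ := by
    obtain ⟨n, hn⟩ := hL π.length
    exact (hn ρ hρπ.length_le).mp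
      ((hT n).prefix_closed π ((hn π le_rfl).mpr hπ) ρ hρπ hρ)
  root := by
    obtain ⟨n, hn⟩ := hL 1
    obtain ⟨q, hq, huniq⟩ := (hT n).root
    exact ⟨q, (hn [q] le_rfl).mp hq, fun q' hq' => huniq q' ((hn [q'] le_rfl).mpr hq')⟩

lemma mem_lang_of_approx [Finite Q] {A : ABA σ Q} {w : ℕ → σ} (T : ℕ → Set (List Q))
    (hT : ∀ n, IsTree (T n)) (hroot : ∀ n, [A.ι] ∈ T n)
    (hstep : ∀ n, ∀ π ∈ T n, π.length ≤ n →
      succs (T n) π ∈ A.δ (lastSt A π) (w (π.length - 1)))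
    (hacc : ∀ n₀, ∃ K, ∀ n ≥ K + 1, ∀ ξ : ℕ → Q,
      (List.ofFn fun i : Fin (K + 1) => ξ i) ∈ T n → ∃ m ≥ n₀, ξ m ∈ A.α) :
    w ∈ A.Lang := by
  obtain ⟨L, hL⟩ : ∃ L : Set (List Q), ∀ I : Set (List Q), I.Finite →
      ∀ k, ∃ n ≥ k, Set.EqOn (T n) L I := exists_frequently_eqOn T
  have hagree : ∀ k, ∃ n ≥ k, ∀ π : List Q, π.length ≤ k → (π ∈ T n ↔ π ∈ L) := fun k => by
    obtain ⟨n, hn, heq⟩ := hL _ (List.finite_length_le Q k) k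
    exact ⟨n, hn, fun π hπ => Iff.of_eq (heq hπ)⟩
  have hLtree := IsTree.of_agree hT fun k => (hagree k).imp fun _ h => h.2
  refine ⟨L, ⟨hLtree, fun π hπ => ?_⟩, ?_, fun ξ hξ n₀ => ?_⟩
  · obtain ⟨n, hn, hagr⟩ := hagree (π.length + 1)
    have hsuccs : succs L π = succs (T n) π := Set.ext fun x =>
      (hagr (π ++ [x]) (by simp)).symm
    rw [hsuccs]
    exact hstep n π ((hagr π (by omega)).mpr hπ) (by omega)
  · obtain ⟨n, -, hagr⟩ := hagree 1
    exact (hagr [A.ι] le_rfl).mp (hroot n)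
  · obtain ⟨K, hK⟩ := hacc n₀
    obtain ⟨n, hn, hagr⟩ := hagree (K + 1)
    exact hK n hn ξ ((hagr _ (by simp)).mpr (hξ K))

/-- The tree generated from the root `ι` by the successor map `f`. -/
inductive genTree (ι : Q) (f : List Q → Set Q) : List Q → Prop
  | root : genTree ι f [ι]
  | snoc {π : List Q} {x : Q} : genTree ι f π → x ∈ f π → genTree ι f (π ++ [x])

namespace genTree

variable {ι : Q} {f : List Q → Set Q}

lemma ne_nil {π : List Q} (h : genTree ι f π) : π ≠ [] := by
  cases h <;> simp

lemma singleton_iff {q : Q} : genTree ι f [q] ↔ q = ι := by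
  refine ⟨fun h => ?_, fun h => h ▸ root⟩
  generalize hl : [q] = l at h
  cases h with
  | root => exact List.singleton_inj.mp hl
  | snoc hπ _ =>
    have := congrArg List.length hl
    simp only [List.length_singleton, List.length_append] at this
    exact absurd (List.length_eq_zero_iff.mp (by omega)) hπ.ne_nil

lemma snoc_iff {π : List Q} {x : Q} (hπ : π ≠ []) :
    genTree ι f (π ++ [x]) ↔ genTree ι f π ∧ x ∈ f π := by
  refine ⟨fun h => ?_, fun h => snoc h.1 h.2⟩
  generalize hl : π ++ [x] = l at h
  cases h with
  | root =>
    have := congrArg List.length hl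
    simp only [List.length_singleton, List.length_append] at this
    exact absurd (List.length_eq_zero_iff.mp (by omega)) hπ
  | snoc h hx =>
    obtain ⟨rfl, hx'⟩ := List.append_inj' hl rfl
    obtain rfl := List.singleton_inj.mp hx'
    exact ⟨h, hx⟩

lemma isTree : IsTree (genTree ι f) where
  not_nil h := h.ne_nil rfl
  prefix_closed π hπ := by
    induction hπ with
    | root =>
      intro ρ hρ hne
      rw [hρ.eq_of_length (Nat.le_antisymm hρ.length_le (List.length_pos_of_ne_nil hne))]
      exact root
    | snoc h hx ih =>
      intro ρ hρ hne
      rcases List.prefix_concat_iff.mp hρ with rfl | hρ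
      · exact snoc h hx
      · exact ih ρ hρ hne
  root := ⟨ι, root, fun _ => singleton_iff.mp⟩

lemma succs_eq {π : List Q} (hπ : genTree ι f π) : succs (genTree ι f) π = f π :=
  Set.ext fun _ => (snoc_iff hπ.ne_nil).trans (and_iff_right hπ)

end genTree

section Transfer

variable {Q' : Type*} {A : ABA σ Q} {A' : ABA σ Q'} {T : Set (List Q)}
  {f : List Q' → Set Q'} {φ : List Q' → List Q}

lemma genTree.map_mem (hroot : φ [A'.ι] = [A.ι]) (hT : [A.ι] ∈ T)
    (hsnoc : ∀ ρ, genTree A'.ι f ρ → φ ρ ∈ T → ∀ x ∈ f ρ,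
      ∃ y ∈ succs T (φ ρ), φ (ρ ++ [x]) = φ ρ ++ [y])
    {ρ : List Q'} (hρ : genTree A'.ι f ρ) : φ ρ ∈ T := by
  induction hρ with
  | root => rwa [hroot]
  | snoc hρ hx ih =>
    obtain ⟨y, hy, heq⟩ := hsnoc _ hρ ih _ hx
    rw [heq]
    exact hy

lemma genTree.accepting (hacc : Accepting A T) (hroot : φ [A'.ι] = [A.ι]) (hT : [A.ι] ∈ T)
    (hsnoc : ∀ ρ, genTree A'.ι f ρ → φ ρ ∈ T → ∀ x ∈ f ρ,
      ∃ y ∈ succs T (φ ρ), φ (ρ ++ [x]) = φ ρ ++ [y])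
    (hα : ∀ ρ, genTree A'.ι f ρ → lastSt A (φ ρ) ∈ A.α → lastSt A' ρ ∈ A'.α) :
    Accepting A' (genTree A'.ι f) := by
  intro ξ' hξ' n₀
  set P : ℕ → List Q := fun n => φ (List.ofFn fun i : Fin (n + 1) => ξ' i)
  have hsucc : ∀ n, ∃ y, P (n + 1) = P n ++ [y] := fun n => by
    have hx := (genTree.snoc_iff (hξ' n).ne_nil).mp (List.ofFn_succ_eq_append ξ' n ▸ hξ' (n + 1))
    obtain ⟨y, -, hy⟩ := hsnoc _ (hξ' n) (genTree.map_mem hroot hT hsnoc (hξ' n)) _ hx.2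
    exact ⟨y, by simp only [P, List.ofFn_succ_eq_append ξ' n, hy]⟩
  have h₀ : P 0 = [A.ι] := by
    have h0 : ξ' 0 = A'.ι := genTree.singleton_iff.mp (hξ' 0)
    simp only [P, List.ofFn_succ, List.ofFn_zero, Fin.val_zero, h0]
    exact hroot
  have hbranch : InfBranch T fun n => (P n).getLastD A.ι := fun n => by
    rw [List.ofFn_getLastD_eq P A.ι ⟨_, h₀⟩ hsucc n]
    exact genTree.map_mem hroot hT hsnoc (hξ' n)
  obtain ⟨m, hm, hαm⟩ := hacc _ hbranch n₀
  refine ⟨m, hm, ?_⟩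
  have := hα _ (hξ' m) hαm
  rwa [lastSt, List.getLastD_ofFn] at this

end Transfer

lemma lastSt_quotABA_map (A : ABA σ Q) (e : Q → Q → Prop) (π : List Q) :
    lastSt (quotABA A e) (π.map (Quot.mk e)) = Quot.mk e (lastSt A π) :=
  List.getLastD_map

lemma Quot.mk_eq_mk_iff_of_preorder {M : Q → Q → Prop} (hr : Reflexive M) (ht : Transitive M)
    {a b : Q} : Quot.mk (fun p q => M p q ∧ M q p) a = Quot.mk _ b ↔ M a b ∧ M b a :=
  Quot.eq.trans (Equivalence.eqvGen_iff
    ⟨fun x => ⟨hr x, hr x⟩, fun h => ⟨h.2, h.1⟩, fun h h' => ⟨ht h.1 h'.1, ht h'.2 h.2⟩⟩)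

lemma lang_subset_lang_quotABA (A : ABA σ Q) (e : Q → Q → Prop) :
    A.Lang ⊆ (quotABA A e).Lang := by
  rintro w ⟨T, hrun, hroot, hacc⟩
  have : Nonempty Q := ⟨A.ι⟩
  let pick : List Q → Quot e → Q := fun π => Function.invFunOn (Quot.mk e) (succs T π)
  -- `rep ρ` is the path of `T` over `ρ` picking, at each step, a successor in the class `ρ` names
  let rep : List (Quot e) → List Q := fun ρ => ρ.tail.foldl (fun π x => π ++ [pick π x]) [A.ι]
  let f : List (Quot e) → Set (Quot e) := fun ρ => Quot.mk e '' succs T (rep ρ)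
  have hrep : ∀ ρ x, ρ ≠ [] → rep (ρ ++ [x]) = rep ρ ++ [pick (rep ρ) x] := fun ρ x hρ => by
    simp [rep, List.tail_append_of_ne_nil hρ, List.foldl_append]
  have hsnoc : ∀ ρ, genTree (Quot.mk e A.ι) f ρ → ∀ x ∈ f ρ,
      pick (rep ρ) x ∈ succs T (rep ρ) ∧ rep (ρ ++ [x]) = rep ρ ++ [pick (rep ρ) x] ∧
        Quot.mk e (pick (rep ρ) x) = x := fun ρ hρ x hx =>
    ⟨Function.invFunOn_mem hx, hrep ρ x hρ.ne_nil, Function.invFunOn_eq hx⟩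
  have hmap : ∀ ρ, genTree (Quot.mk e A.ι) f ρ → (rep ρ).map (Quot.mk e) = ρ := by
    intro ρ hρ
    induction hρ with
    | root => rfl
    | snoc hρ hx ih => rw [(hsnoc _ hρ _ hx).2.1, List.map_append, ih, List.map_singleton,
        (hsnoc _ hρ _ hx).2.2]
  have hmem : ∀ ρ, genTree (Quot.mk e A.ι) f ρ → rep ρ ∈ T := fun ρ =>
    genTree.map_mem (A' := quotABA A e) rfl hroot fun ρ hρ _ x hx =>
      ⟨_, (hsnoc ρ hρ x hx).1, (hsnoc ρ hρ x hx).2.1⟩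
  have hlast : ∀ ρ, genTree (Quot.mk e A.ι) f ρ →
      lastSt (quotABA A e) ρ = Quot.mk e (lastSt A (rep ρ)) := fun ρ hρ => by
    conv_lhs => rw [← hmap ρ hρ]
    exact lastSt_quotABA_map A e _
  refine ⟨genTree (Quot.mk e A.ι) f, ⟨genTree.isTree, fun ρ hρ => ?_⟩, genTree.root,
    genTree.accepting (A' := quotABA A e) hacc rfl hroot
      (fun ρ hρ _ x hx => ⟨_, (hsnoc ρ hρ x hx).1, (hsnoc ρ hρ x hx).2.1⟩)
      fun ρ hρ hα => hlast ρ hρ ▸ Set.mem_image_of_mem _ hα⟩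
  rw [genTree.succs_eq hρ]
  have hlen : (rep ρ).length = ρ.length := by
    rw [← congrArg List.length (hmap ρ hρ), List.length_map]
  exact ⟨_, (hlast ρ hρ).symm, _, hlen ▸ hrun.step _ (hmem ρ hρ), rfl⟩

lemma lang_quotABA_subset_lang_extABA (A : ABA σ Q) {M : Q → Q → Prop} (hr : Reflexive M)
    (ht : Transitive M) :
    (quotABA A fun p q => M p q ∧ M q p).Lang ⊆ (extABA A M).Lang := by
  set e : Q → Q → Prop := fun p q => M p q ∧ M q p
  rintro w ⟨T, hrun, hroot, hacc⟩
  have : Nonempty Q := ⟨A.ι⟩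
  choose! src hsrc P hP hsuccs using fun ρ hρ => hrun.step ρ hρ
  let f : List Q → Set Q := fun π => P (π.map (Quot.mk e))
  have hsnoc : ∀ π, genTree A.ι f π → π.map (Quot.mk e) ∈ T → ∀ x ∈ f π,
      ∃ y ∈ succs T (π.map (Quot.mk e)), (π ++ [x]).map (Quot.mk e) = π.map (Quot.mk e) ++ [y] :=
    fun π _ hπ x hx => ⟨Quot.mk e x, hsuccs _ hπ ▸ Set.mem_image_of_mem _ hx, List.map_append ..⟩
  have hmem : ∀ π, genTree A.ι f π → π.map (Quot.mk e) ∈ T := fun π =>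
    genTree.map_mem (A' := A) (A := quotABA A e) rfl hroot hsnoc
  refine ⟨genTree A.ι f, ⟨genTree.isTree, fun π hπ => ?_⟩, genTree.root,
    genTree.accepting (A := quotABA A e) (A' := extABA A M) hacc rfl hroot hsnoc
      fun π _ hα => ?_⟩
  · rw [genTree.succs_eq hπ]
    have hsrcπ := hsrc _ (hmem π hπ)
    rw [lastSt_quotABA_map] at hsrcπ
    refine ⟨src _, ((Quot.mk_eq_mk_iff_of_preorder hr ht).mp hsrcπ).1, ?_⟩
    simpa using hP _ (hmem π hπ)
  · rw [lastSt_quotABA_map] at hα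
    obtain ⟨q, hq, hqπ⟩ := hα
    exact ⟨q, hq, (Quot.mk_eq_mk_iff_of_preorder hr ht).mp hqπ⟩

section Simulation

variable {A : ABA σ Q} {F B : Q → Q → Prop}

lemma exists_minimal_of_refl_trans [Finite Q] (hFr : Reflexive F) (hFt : Transitive F)
    {N : Set Q} (hN : N.Nonempty) : ∃ e ∈ N, ∀ e' ∈ N, F e' e → F e e' := by
  let _ : Preorder Q := { le := F, le_refl := hFr, le_trans := fun _ _ _ => @hFt _ _ _ }
  obtain ⟨e, he⟩ := N.toFinite.exists_minimal hN
  exact ⟨e, he.prop, fun e' he' h => he.2 he' h⟩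

def upClosure (F : Q → Q → Prop) (N : Set Q) : Set Q := {r | ∃ e ∈ N, F e r}

lemma upClosure_mono (F : Q → Q → Prop) {N N' : Set Q} (h : N ⊆ N') :
    upClosure F N ⊆ upClosure F N' := fun _ ⟨e, he, her⟩ => ⟨e, h he, her⟩

lemma mem_upClosure_of_mem (hFt : Transitive F) {N : Set Q} {e r : Q}
    (he : e ∈ upClosure F N) (her : F e r) : r ∈ upClosure F N :=
  let ⟨x, hx, hxe⟩ := he
  ⟨x, hx, hFt hxe her⟩

lemma upClosure_diff_singleton_ssubset (hFr : Reflexive F) (hunamb : Unambiguous A F)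
    {y : Q} {a : σ} {E N : Set Q} (hE : E ∈ A.δ y a) (hNE : N ⊆ E) {e : Q} (he : e ∈ N)
    (hmin : ∀ e' ∈ N, F e' e → F e e') : upClosure F (N \ {e}) ⊂ upClosure F N := by
  refine ⟨upClosure_mono F Set.sdiff_subset, fun h => ?_⟩
  obtain ⟨x, ⟨hxN, hxe⟩, hxe'⟩ := h ⟨e, he, hFr e⟩
  exact hunamb y a E hE x (hNE hxN) e (hNE he) hxe ⟨hxe', hmin x hxN hxe'⟩

/-- The states of `E` outside `P` are replaced one at a time through the backward simulation,
`F`-minimal ones first; the `F`-upward closure of the states still outside `P` shrinks. -/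
lemma exists_transition_subset [Finite Q] (hFr : Reflexive F) (hFt : Transitive F)
    (hunamb : Unambiguous A F) (hBr : Reflexive B) (hBt : Transitive B)
    (hB : BackwardSim A F B) {P U : Set Q} (hP : ∀ e r, e ∈ P → F e r → r ∈ P)
    (hU : ∀ e r, e ∈ U → F e r → r ∈ U) (hres : ∀ e ∈ U, ∃ ê ∈ P, B e ê)
    {a : σ} {y : Q} {E : Set Q} (hE : E ∈ A.δ y a) (hEU : E ⊆ P ∪ U) :
    ∃ y', B y y' ∧ ∃ E' ∈ A.δ y' a, E' ⊆ P := by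
  induction h : (upClosure F (E \ P)).ncard using Nat.strong_induction_on generalizing y E with
  | _ n ih =>
    rcases (E \ P).eq_empty_or_nonempty with hEP | hEP
    · exact ⟨y, hBr y, E, hE, Set.sdiff_eq_empty.mp hEP⟩
    obtain ⟨e, ⟨heE, heP⟩, hmin⟩ := exists_minimal_of_refl_trans hFr hFt hEP
    obtain ⟨ê, hêP, heê⟩ := hres e ((hEU heE).resolve_left heP)
    obtain ⟨s, R, -, hR, hys, hRE⟩ := (hB e ê heê).2.2 a y (E \ {e}) (fun h => h.2 rfl)
      (by rwa [Set.insert_sdiff_singleton, Set.insert_eq_of_mem heE])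
    have hnew : ∀ r ∈ insert ê R \ P, ∃ x ∈ (E \ P) \ {e}, F x r := by
      rintro r ⟨hr | hr, hrP⟩
      · exact absurd (hr ▸ hêP) hrP
      obtain ⟨x, ⟨hxE, hxe⟩, hxr⟩ := hRE r hr
      exact ⟨x, ⟨⟨hxE, fun hxP => hrP (hP x r hxP hxr)⟩, hxe⟩, hxr⟩
    have hsub : upClosure F (insert ê R \ P) ⊆ upClosure F ((E \ P) \ {e}) := by
      rintro r ⟨r', hr', hr'r⟩
      obtain ⟨x, hx, hxr'⟩ := hnew r' hr'
      exact ⟨x, hx, hFt hxr' hr'r⟩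
    have hlt : (upClosure F (insert ê R \ P)).ncard < n := h ▸
      (Set.ncard_le_ncard hsub (Set.toFinite _)).trans_lt (Set.ncard_lt_ncard
        (upClosure_diff_singleton_ssubset hFr hunamb hE Set.sdiff_subset ⟨heE, heP⟩ hmin)
        (Set.toFinite _))
    have hRU : insert ê R ⊆ P ∪ U := fun r hr => by
      by_cases hrP : r ∈ P
      · exact Or.inl hrP
      obtain ⟨x, ⟨⟨hxE, hxP⟩, -⟩, hxr⟩ := hnew r ⟨hr, hrP⟩
      exact Or.inr (hU x r ((hEU hxE).resolve_left hxP) hxr)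
    obtain ⟨y', hsy', E', hE', hE'P⟩ := ih _ hlt hR hRU rfl
    exact ⟨y', hBt hys hsy', E', hE', hE'P⟩

end Simulation

/-- A finite tree of states approximating a run of `A`; a leaf is labelled with the path `o`
of the run of `A⁺` that it stands for. -/
inductive ApproxTree (Q : Type*) where
  | leaf (q : Q) (o : List Q)
  | node (q : Q) (S : Set Q) (c : Q → ApproxTree Q)

namespace ApproxTree

def root : ApproxTree Q → Q
  | leaf q _ => q
  | node q _ _ => q

def origins : ApproxTree Q → Set (List Q)
  | leaf _ o => {o}
  | node _ S c => {o | ∃ x ∈ S, o ∈ origins (c x)}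

def paths : ApproxTree Q → Set (List Q)
  | leaf q _ => {[q]}
  | node q S c => insert [q] {π | ∃ x ∈ S, ∃ π' ∈ paths (c x), π = q :: π'}

lemma exists_eq_cons_of_mem_paths {t : ApproxTree Q} {π : List Q} (hπ : π ∈ t.paths) :
    ∃ π', π = t.root :: π' := by
  cases t with
  | leaf q o => exact ⟨[], hπ⟩
  | node q S c =>
    rcases hπ with rfl | ⟨x, -, π', -, rfl⟩
    · exact ⟨[], rfl⟩
    · exact ⟨π', rfl⟩

lemma ne_nil_of_mem_paths {t : ApproxTree Q} {π : List Q} (hπ : π ∈ t.paths) : π ≠ [] := by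
  obtain ⟨π', rfl⟩ := exists_eq_cons_of_mem_paths hπ
  exact List.cons_ne_nil _ _

lemma singleton_mem_paths_iff {t : ApproxTree Q} {q : Q} : [q] ∈ t.paths ↔ q = t.root := by
  refine ⟨fun h => ?_, fun h => ?_⟩
  · obtain ⟨_, h⟩ := exists_eq_cons_of_mem_paths h
    exact (List.cons_eq_cons.mp h).1
  · subst h
    cases t
    · exact rfl
    · exact Or.inl rfl

lemma isTree_paths (t : ApproxTree Q) : IsTree t.paths where
  not_nil h := ne_nil_of_mem_paths h rfl
  prefix_closed π hπ ρ hρ hne := by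
    induction t generalizing π ρ with
    | leaf q o =>
      rw [paths, Set.mem_singleton_iff] at hπ
      subst hπ
      rw [hρ.eq_of_length (Nat.le_antisymm hρ.length_le (List.length_pos_of_ne_nil hne))]
      rfl
    | node q S c ih =>
      rcases hπ with rfl | ⟨x, hx, π', hπ', rfl⟩
      · rw [hρ.eq_of_length (Nat.le_antisymm hρ.length_le (List.length_pos_of_ne_nil hne))]
        exact Or.inl rfl
      obtain ⟨ρ', rfl⟩ : ∃ ρ', ρ = q :: ρ' := by
        cases ρ with
        | nil => exact absurd rfl hne
        | cons a ρ' => exact ⟨ρ', (List.cons_prefix_cons.mp hρ).1 ▸ rfl⟩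
      by_cases hρ' : ρ' = []
      · exact hρ' ▸ Or.inl rfl
      exact Or.inr ⟨x, hx, ρ', ih x π' hπ' ρ' (List.cons_prefix_cons.mp hρ).2 hρ', rfl⟩
  root := ⟨t.root, singleton_mem_paths_iff.mpr rfl, fun _ => singleton_mem_paths_iff.mp⟩

section WellRooted

variable {q : Q} {S : Set Q} {c : Q → ApproxTree Q} (hc : ∀ x ∈ S, (c x).root = x)
include hc

lemma succs_paths_node_root : succs (node q S c).paths [q] = S := by
  ext x
  refine ⟨fun h => ?_, fun hx => Or.inr ⟨x, hx, [x], ?_, rfl⟩⟩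
  · rcases h with h | ⟨x', hx', π', hπ', h⟩
    · simp at h
    obtain rfl := (List.cons_eq_cons.mp h).2
    rwa [singleton_mem_paths_iff.mp hπ', hc x' hx']
  · exact singleton_mem_paths_iff.mpr (hc x hx).symm

lemma succs_paths_node_cons {x : Q} (hx : x ∈ S) {π : List Q} (hπ : π ∈ (c x).paths) :
    succs (node q S c).paths (q :: π) = succs (c x).paths π := by
  ext y
  refine ⟨fun h => ?_, fun h => Or.inr ⟨x, hx, π ++ [y], h, rfl⟩⟩
  rcases h with h | ⟨x', hx', π', hπ', h⟩
  · exact absurd (List.cons_eq_cons.mp h).2 (by simp)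
  obtain ⟨π₁, rfl⟩ := exists_eq_cons_of_mem_paths hπ
  obtain ⟨π₂, rfl⟩ := exists_eq_cons_of_mem_paths hπ'
  simp only [List.cons_append, List.cons.injEq] at h
  obtain ⟨-, h₁, rfl⟩ := h
  rw [hc x hx, hc x' hx'] at h₁
  subst h₁
  exact hπ'

end WellRooted

end ApproxTree

section Approximation

open ApproxTree

variable (A : ABA σ Q) (w : ℕ → σ) (M : Q → Q → Prop) (Tp : Set (List Q))

/-- The state `q` may stand in for the node `o` of the run `Tp` of `A⁺`. -/
def LeafCert (o : List Q) (q : Q) : Prop :=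
  ∃ p, M p q ∧ succs Tp o ∈ A.δ p (w (o.length - 1)) ∧
    (lastSt A o ∈ (extABA A M).α → ∃ qα ∈ A.α, M p qα ∧ M qα q)

/-- `Approx D t j`: `t` sits at depth `j` of a run of `A` truncated at depth `D`, shadowing
the run `Tp` of `A⁺`. Nodes take transitions of `A`, leaves are at depth `D`, and a node is
accepting as soon as some leaf below it stands for a path of `Tp` accepting (in `A⁺`) at
that depth. -/
def Approx (D : ℕ) : ApproxTree Q → ℕ → Prop
  | leaf q o, j => j = D ∧ o ∈ Tp ∧ o.length = D + 1 ∧ LeafCert A w M Tp o q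
  | node q S c, j => j < D ∧ S ∈ A.δ q (w j) ∧
      (∀ o ∈ (node q S c).origins, o.getD j A.ι ∈ (extABA A M).α → q ∈ A.α) ∧
      ∀ x ∈ S, (c x).root = x ∧ Approx D (c x) (j + 1)

variable {A w M Tp} {F B : Q → Q → Prop}

lemma LeafCert.mono (hM : IsMediated F B M) {o : List Q} {q y : Q}
    (h : LeafCert A w M Tp o q) (hqy : F q y) : LeafCert A w M Tp o y := by
  obtain ⟨p, hpq, hS, hα⟩ := h
  refine ⟨p, hM.fwd_ext _ _ _ hpq hqy, hS, fun ho => ?_⟩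
  obtain ⟨qα, hqα, hpqα, hqαq⟩ := hα ho
  exact ⟨qα, hqα, hpqα, hM.fwd_ext _ _ _ hqαq hqy⟩

lemma leafCert_lastSt (hM : IsMediated F B M) (hrun : IsRun (extABA A M) w Tp) {o : List Q}
    (ho : o ∈ Tp) : LeafCert A w M Tp o (lastSt A o) := by
  obtain ⟨p, hpo, hS⟩ := hrun.step o ho
  refine ⟨p, hpo, hS, fun ⟨qα, hqα, hqαo, hoqα⟩ => ⟨qα, hqα, hM.trans hpo hoqα, hqαo⟩⟩

/-- The mediator `s` of `p ≼_M y` forward-simulates the transition of `p`; when `o` is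
accepting, going through the accepting state between `p` and `y` makes `s` accepting. -/
lemma LeafCert.exists_transition (hF : ForwardSim A F) (hBt : Transitive B)
    (hB : BackwardSim A F B) (hM : IsMediated F B M) {o : List Q} {y : Q}
    (h : LeafCert A w M Tp o y) :
    ∃ s, B y s ∧ (lastSt A o ∈ (extABA A M).α → s ∈ A.α) ∧
      ∃ R ∈ A.δ s (w (o.length - 1)), ∀ r ∈ R, ∃ c ∈ succs Tp o, F c r := by
  obtain ⟨p, hpy, hS, hα⟩ := h
  by_cases ho : lastSt A o ∈ (extABA A M).α
  · obtain ⟨qα, hqα, hpqα, hqαy⟩ := hα ho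
    obtain ⟨s₀, hqαs₀, hys₀⟩ := hM.mediator _ _ hqαy
    obtain ⟨s, hps, hs₀s⟩ := hM.mediator _ _ (hM.fwd_ext _ _ _ hpqα hqαs₀)
    obtain ⟨R, hR, hRS⟩ := (hF _ _ hps).2 _ _ hS
    exact ⟨s, hBt hys₀ hs₀s, fun _ => (hB _ _ hs₀s).2.1 ((hF _ _ hqαs₀).1 hqα), R, hR, hRS⟩
  · obtain ⟨s, hps, hys⟩ := hM.mediator _ _ hpy
    obtain ⟨R, hR, hRS⟩ := (hF _ _ hps).2 _ _ hS
    exact ⟨s, hys, fun h => absurd h ho, R, hR, hRS⟩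

namespace Approx

variable {D m : ℕ}

lemma origins_mem {t : ApproxTree Q} {j : ℕ} (ht : Approx A w M Tp D t j) {o : List Q}
    (ho : o ∈ t.origins) : o ∈ Tp ∧ o.length = D + 1 := by
  induction t generalizing j with
  | leaf q o' =>
    obtain ⟨-, hoTp, hlen, -⟩ := ht
    rw [origins, Set.mem_singleton_iff] at ho
    exact ho ▸ ⟨hoTp, hlen⟩
  | node q S c ih =>
    obtain ⟨x, hx, ho⟩ := ho
    exact ih x (ht.2.2.2 x hx).2 ho

lemma origins_nonempty (hne : A.NoEmpty) {t : ApproxTree Q} {j : ℕ}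
    (ht : Approx A w M Tp D t j) : t.origins.Nonempty := by
  induction t generalizing j with
  | leaf q o => exact ⟨o, rfl⟩
  | node q S c ih =>
    obtain ⟨x, hx⟩ := Set.nonempty_iff_ne_empty.mpr fun h => hne q (w j) (h ▸ ht.2.1)
    obtain ⟨o, ho⟩ := ih x (ht.2.2.2 x hx).2
    exact ⟨o, x, hx, ho⟩

lemma raise (hF : ForwardSim A F) (hM : IsMediated F B M) {t : ApproxTree Q} {j : ℕ}
    (ht : Approx A w M Tp D t j) {r : Q} (hr : F t.root r) :
    ∃ t', t'.root = r ∧ Approx A w M Tp D t' j ∧ t'.origins ⊆ t.origins := by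
  induction t generalizing j r with
  | leaf q o =>
    obtain ⟨hj, ho, hlen, hcert⟩ := ht
    exact ⟨leaf r o, rfl, ⟨hj, ho, hlen, hcert.mono hM hr⟩, subset_rfl⟩
  | node q S c ih =>
    obtain ⟨hj, hS, hα, hc⟩ := ht
    obtain ⟨E, hE, hES⟩ := (hF _ _ hr).2 _ _ hS
    have hsub : ∀ e ∈ E, ∃ te : ApproxTree Q, te.root = e ∧ Approx A w M Tp D te (j + 1) ∧
        te.origins ⊆ (node q S c).origins := fun e he => by
      obtain ⟨x, hx, hxe⟩ := hES e he
      obtain ⟨te, hroot, hte, hsub⟩ := ih x (hc x hx).2 ((hc x hx).1 ▸ hxe)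
      exact ⟨te, hroot, hte, fun o ho => ⟨x, hx, hsub ho⟩⟩
    have : Nonempty (ApproxTree Q) := ⟨leaf r []⟩
    choose! te hroot hte hsub using hsub
    refine ⟨node r E te, rfl, ⟨hj, hE, fun o ⟨e, he, ho⟩ hoα => ?_, fun e he =>
      ⟨hroot e he, hte e he⟩⟩, fun o ⟨e, he, ho⟩ => hsub e he ho⟩
    exact (hF _ _ hr).1 (hα o (hsub e he ho) hoα)

lemma resolve_leaf (hF : ForwardSim A F) (hBt : Transitive B) (hB : BackwardSim A F B)
    (hM : IsMediated F B M) (hrun : IsRun (extABA A M) w Tp) {q : Q} {o : List Q} {j : ℕ}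
    (ht : Approx A w M Tp m (leaf q o) j) {y : Q} (hqy : F q y) :
    ∃ ŷ t', B y ŷ ∧ t'.root = ŷ ∧ Approx A w M Tp (m + 1) t' j ∧
      ∀ o' ∈ t'.origins, ∃ o₀ ∈ (leaf q o).origins, o₀ <+: o' := by
  obtain ⟨rfl, ho, hlen, hcert⟩ := ht
  obtain ⟨s, hys, hsα, R, hR, hRS⟩ := (hcert.mono hM hqy).exists_transition hF hBt hB hM
  have : Nonempty Q := ⟨q⟩
  choose! cr hcr hcrr using hRS
  refine ⟨s, node s R fun r => leaf r (o ++ [cr r]), hys, rfl,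
    ⟨by omega, by simpa [hlen] using hR, fun o' ⟨r, hr, ho'⟩ hα => ?_, fun r hr =>
      ⟨rfl, rfl, hcr r hr, by simp [hlen], ?_⟩⟩, fun o' ⟨r, hr, ho'⟩ => ⟨o, rfl, ?_⟩⟩
  · rw [Set.mem_singleton_iff.mp ho', (List.prefix_append o _).getD_eq (by omega)] at hα
    apply hsα
    simpa [lastSt, List.getLastD_eq_getLast?, List.getLast?_eq_getElem?, hlen] using hα
  · have hcert' := leafCert_lastSt hM hrun (hcr r hr)
    rw [lastSt, List.getLastD_concat] at hcert'
    exact hcert'.mono hM (hcrr r hr)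
  · rw [Set.mem_singleton_iff.mp ho']
    exact List.prefix_append o _

lemma resolve_node [Finite Q] (hFr : Reflexive F) (hFt : Transitive F) (hF : ForwardSim A F)
    (hunamb : Unambiguous A F) (hBr : Reflexive B) (hBt : Transitive B)
    (hB : BackwardSim A F B) (hM : IsMediated F B M) {z : Q} {S : Set Q}
    {c : Q → ApproxTree Q} {j : ℕ} (ht : Approx A w M Tp m (node z S c) j) {y : Q}
    (hzy : F z y)
    (hchild : ∀ x ∈ S, ∀ e, F x e → ∃ ê te, B e ê ∧ te.root = ê ∧
      Approx A w M Tp (m + 1) te (j + 1) ∧ ∀ o' ∈ te.origins, ∃ o ∈ (c x).origins, o <+: o') :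
    ∃ ŷ t', B y ŷ ∧ t'.root = ŷ ∧ Approx A w M Tp (m + 1) t' j ∧
      ∀ o' ∈ t'.origins, ∃ o ∈ (node z S c).origins, o <+: o' := by
  have ⟨hj, hS, hα, hc⟩ := ht
  obtain ⟨E, hE, hES⟩ := (hF _ _ hzy).2 _ _ hS
  let P : Set Q := {e | ∃ te : ApproxTree Q, te.root = e ∧ Approx A w M Tp (m + 1) te (j + 1) ∧
    ∀ o' ∈ te.origins, ∃ o ∈ (node z S c).origins, o <+: o'}
  have hP : ∀ e r, e ∈ P → F e r → r ∈ P := by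
    rintro e r ⟨te, rfl, hte, hext⟩ her
    obtain ⟨te', hroot, hte', hsub⟩ := hte.raise hF hM her
    exact ⟨te', hroot, hte', fun o' ho' => hext o' (hsub ho')⟩
  have hres : ∀ e ∈ upClosure F S, ∃ ê ∈ P, B e ê := by
    rintro e ⟨x, hx, hxe⟩
    obtain ⟨ê, te, heê, rfl, hte, hext⟩ := hchild x hx e hxe
    refine ⟨te.root, ?_, heê⟩
    simp only [P, Set.mem_ofPred_eq]
    exact ⟨te, rfl, hte, fun o' ho' =>
      (hext o' ho').imp fun o ⟨ho, hoo'⟩ => ⟨⟨x, hx, ho⟩, hoo'⟩⟩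
  obtain ⟨ŷ, hyŷ, E', hE', hE'P⟩ := exists_transition_subset hFr hFt hunamb hBr hBt hB hP
    (fun _ _ => mem_upClosure_of_mem hFt) hres hE fun e he => Or.inr (hES e he)
  have : Nonempty (ApproxTree Q) := ⟨leaf z []⟩
  choose! te hroot hte hext using show ∀ e ∈ E', e ∈ P from hE'P
  refine ⟨ŷ, node ŷ E' te, hyŷ, rfl, ⟨by omega, hE', fun o' ⟨e, he, ho'⟩ hα' => ?_,
    fun e he => ⟨hroot e he, hte e he⟩⟩, fun o' ⟨e, he, ho'⟩ => hext e he o' ho'⟩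
  obtain ⟨o, ho, hoo'⟩ := hext e he o' ho'
  have hlen := (ht.origins_mem ho).2
  rw [hoo'.getD_eq (by omega)] at hα'
  exact (hB _ _ hyŷ).2.1 ((hF _ _ hzy).1 (hα o ho hα'))

lemma resolve [Finite Q] (hFr : Reflexive F) (hFt : Transitive F) (hF : ForwardSim A F)
    (hunamb : Unambiguous A F) (hBr : Reflexive B) (hBt : Transitive B)
    (hB : BackwardSim A F B) (hM : IsMediated F B M) (hrun : IsRun (extABA A M) w Tp)
    (t : ApproxTree Q) {j : ℕ} (ht : Approx A w M Tp m t j) {y : Q} (hy : F t.root y) :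
    ∃ ŷ t', B y ŷ ∧ t'.root = ŷ ∧ Approx A w M Tp (m + 1) t' j ∧
      ∀ o' ∈ t'.origins, ∃ o ∈ t.origins, o <+: o' := by
  induction t generalizing j y with
  | leaf q o => exact ht.resolve_leaf hF hBt hB hM hrun hy
  | node z S c ih =>
    exact ht.resolve_node hFr hFt hF hunamb hBr hBt hB hM hy fun x hx e hxe =>
      ih x (ht.2.2.2 x hx).2 (by rw [(ht.2.2.2 x hx).1]; exact hxe)

lemma succs_paths {t : ApproxTree Q} {j : ℕ} (ht : Approx A w M Tp D t j) {π : List Q}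
    (hπ : π ∈ t.paths) (hlen : j + π.length ≤ D) :
    succs t.paths π ∈ A.δ (lastSt A π) (w (j + π.length - 1)) := by
  induction t generalizing j π with
  | leaf q o =>
    obtain ⟨rfl, -⟩ := ht
    rw [paths, Set.mem_singleton_iff] at hπ
    simp [hπ] at hlen
  | node q S c ih =>
    obtain ⟨hj, hS, -, hc⟩ := ht
    rcases hπ with rfl | ⟨x, hx, π', hπ', rfl⟩
    · rw [succs_paths_node_root fun x hx => (hc x hx).1]
      simpa [lastSt] using hS
    · rw [succs_paths_node_cons (fun x hx => (hc x hx).1) hx hπ',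
        lastSt_cons A q (ne_nil_of_mem_paths hπ')]
      simp only [List.length_cons] at hlen ⊢
      rw [show j + (π'.length + 1) - 1 = j + 1 + π'.length - 1 by omega]
      exact ih x (hc x hx).2 hπ' (by omega)

lemma exists_origin_dominated (hne : A.NoEmpty) {t : ApproxTree Q} {j : ℕ}
    (ht : Approx A w M Tp D t j) {π : List Q} (hπ : π ∈ t.paths) (hlen : j + π.length ≤ D) :
    ∃ o ∈ t.origins, ∀ i < π.length,
      o.getD (j + i) A.ι ∈ (extABA A M).α → π.getD i A.ι ∈ A.α := by
  induction t generalizing j π with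
  | leaf q o =>
    obtain ⟨rfl, -⟩ := ht
    rw [paths, Set.mem_singleton_iff] at hπ
    simp [hπ] at hlen
  | node q S c ih =>
    obtain ⟨o, ho⟩ := origins_nonempty hne ht
    obtain ⟨hj, hS, hα, hc⟩ := ht
    rcases hπ with rfl | ⟨x, hx, π', hπ', rfl⟩
    · refine ⟨o, ho, fun i hi hoα => ?_⟩
      obtain rfl : i = 0 := by simpa using hi
      exact hα o ho hoα
    · simp only [List.length_cons] at hlen
      obtain ⟨o, ho, hdom⟩ := ih x (hc x hx).2 hπ' (by omega)
      refine ⟨o, ⟨x, hx, ho⟩, fun i hi hoα => ?_⟩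
      cases i with
      | zero => exact hα o ⟨x, hx, ho⟩ hoα
      | succ i =>
        exact hdom i (by simpa using hi) (by rwa [show j + 1 + i = j + (i + 1) by omega])

end Approx

lemma exists_approx [Finite Q] (hFr : Reflexive F) (hFt : Transitive F) (hF : ForwardSim A F)
    (hunamb : Unambiguous A F) (hBr : Reflexive B) (hBt : Transitive B)
    (hB : BackwardSim A F B) (hM : IsMediated F B M) (hrun : IsRun (extABA A M) w Tp)
    (hroot : [A.ι] ∈ Tp) (k : ℕ) : ∃ t : ApproxTree Q, t.root = A.ι ∧ Approx A w M Tp k t 0 := by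
  induction k with
  | zero => exact ⟨leaf A.ι [A.ι], rfl, rfl, hroot, rfl, leafCert_lastSt hM hrun hroot⟩
  | succ k ih =>
    obtain ⟨t, htroot, ht⟩ := ih
    obtain ⟨ŷ, t', hιŷ, rfl, ht', -⟩ :=
      ht.resolve hFr hFt hF hunamb hBr hBt hB hM hrun t (y := A.ι) (by rw [htroot]; exact hFr _)
    exact ⟨t', (hB _ _ hιŷ).1 rfl, ht'⟩

lemma lang_extABA_subset_lang [Finite Q] (hFr : Reflexive F) (hFt : Transitive F)
    (hF : ForwardSim A F) (hunamb : Unambiguous A F) (hBr : Reflexive B) (hBt : Transitive B)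
    (hB : BackwardSim A F B) (hM : IsMediated F B M) (hne : A.NoEmpty) :
    (extABA A M).Lang ⊆ A.Lang := by
  rintro w ⟨Tp, hrun, hroot, hacc⟩
  choose t htroot ht using exists_approx hFr hFt hF hunamb hBr hBt hB hM hrun hroot
  refine mem_lang_of_approx (fun n => (t n).paths) (fun n => isTree_paths _)
    (fun n => singleton_mem_paths_iff.mpr (htroot n).symm)
    (fun n π hπ hlen => by simpa using (ht n).succs_paths hπ (by omega)) fun n₀ => ?_
  obtain ⟨K, hK⟩ := hacc.exists_bound hrun.tree n₀
  refine ⟨K, fun n hn ξ hξ => ?_⟩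
  obtain ⟨o, ho, hdom⟩ := (ht n).exists_origin_dominated hne hξ (by simp; omega)
  obtain ⟨hoTp, holen⟩ := (ht n).origins_mem ho
  obtain ⟨i, hi, hiK, hiα⟩ :=
    hK (o.take (K + 1)) (hrun.tree.take_mem hoTp (by omega)) (by simp; omega)
  rw [← (List.take_prefix _ o).getD_eq (by simp; omega)] at hiα
  refine ⟨i, hi, ?_⟩
  rw [← List.getD_ofFn ξ (show i < K + 1 by omega) A.ι]
  exact hdom i (by simp; omega) (by rwa [zero_add])

end Approximation

theorem stmt_18_general [Finite Q] (A : ABA σ Q) (hne : A.NoEmpty)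
    (F B M : Q → Q → Prop)
    (hFr : Reflexive F) (hFt : Transitive F) (hF : ForwardSim A F)
    (hunamb : Unambiguous A F)
    (hBr : Reflexive B) (hBt : Transitive B) (hB : BackwardSim A F B)
    (hM : IsMediated F B M) :
    ABA.Lang (quotABA A fun p q => M p q ∧ M q p) = ABA.Lang A :=
  subset_antisymm
    ((lang_quotABA_subset_lang_extABA A hM.refl hM.trans).trans
      (lang_extABA_subset_lang hFr hFt hF hunamb hBr hBt hB hM hne))
    (lang_subset_lang_quotABA A _)

/-- Quotienting `A` with respect to the mediated equivalence `≡_M = ≼_M ∩ ≼_M⁻¹`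
preserves the language: `L(A/≡_M) = L(A)`. -/
theorem stmt_18 [Finite σ] [Finite Q] (A : ABA σ Q) (hne : A.NoEmpty)
    (F B M : Q → Q → Prop)
    (hFr : Reflexive F) (hFt : Transitive F) (hF : ForwardSim A F)
    (hunamb : Unambiguous A F)
    (hBr : Reflexive B) (hBt : Transitive B) (hB : BackwardSim A F B)
    (hM : IsMediated F B M) :
    ABA.Lang (quotABA A fun p q => M p q ∧ M q p) = ABA.Lang A :=
  stmt_18_general A hne F B M hFr hFt hF hunamb hBr hBt hB hM
end

section
/- Let A = (Σ, Q, ι, δ, α) be an alternating Büchi automaton, ≼_F a reflexive and transitive forward simulation on A, and ≼_B the maximal backward simulation on A parametrised by ≼_F. Let A^⊙ be the labelled transition system obtained from A via environments, I the initial preorder on the states of A^⊙, and ≼^I the largest simulation on A^⊙ contained in I. Then for all q, r ∈ Q: q ≼_B r if and only if q^⊙ ≼^I r^⊙. -/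
variable {σ Q : Type*}

/-- The states of the LTS `A^⊙`: states of `A` together with (candidate) environments,
triples `(p, a, P')`. -/
abbrev QO (σ Q : Type*) := Q ⊕ (Q × σ × Set Q)

/-- `(p, a, P')` is an environment of `A`: `P' = P \ {p'}` for a transition `p →a P`
of `A` and some `p' ∈ P`. -/
def IsEnv (A : ABA σ Q) (e : Q × σ × Set Q) : Prop :=
  ∃ P p', P ∈ A.δ e.1 e.2.1 ∧ p' ∈ P ∧ e.2.2 = P \ {p'}

/-- The transitions of the LTS `A^⊙`: `(p, a, P \ {p'})^⊙ →a p^⊙` and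
`p'^⊙ →a (p, a, P \ {p'})^⊙` for every transition `p →a P` of `A` and every `p' ∈ P`. -/
inductive OTrans (A : ABA σ Q) : QO σ Q → σ → QO σ Q → Prop
  | env_to_state {p : Q} {a : σ} {P : Set Q} {p' : Q}
      (h : P ∈ A.δ p a) (h' : p' ∈ P) :
      OTrans A (Sum.inr (p, a, P \ {p'})) a (Sum.inl p)
  | state_to_env {p : Q} {a : σ} {P : Set Q} {p' : Q}
      (h : P ∈ A.δ p a) (h' : p' ∈ P) :
      OTrans A (Sum.inl p') a (Sum.inr (p, a, P \ {p'}))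

/-- A simulation on a labelled transition system. -/
def IsSimul {S τ : Type*} (tr : S → τ → S → Prop) (R : S → S → Prop) : Prop :=
  ∀ q r, R q r → ∀ a q', tr q a q' → ∃ r', tr r a r' ∧ R q' r'

/-- `x ≼^I y` : the largest simulation contained in `I` (the union of all simulations
contained in `I`) relates `x` and `y`. -/
def SimLE {S τ : Type*} (tr : S → τ → S → Prop) (I : S → S → Prop) (x y : S) : Prop :=
  ∃ R, IsSimul tr R ∧ (∀ u v, R u v → I u v) ∧ R x y

/-- The initial preorder `I` on the states of `A^⊙`. -/
def I0 (A : ABA σ Q) (F : Q → Q → Prop) : QO σ Q → QO σ Q → Prop := fun x y =>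
  match x, y with
  | Sum.inl q1, Sum.inl q2 => (q1 = A.ι → q2 = A.ι) ∧ (q1 ∈ A.α → q2 ∈ A.α)
  | Sum.inr e1, Sum.inr e2 =>
      IsEnv A e1 ∧ IsEnv A e2 ∧ e1.2.1 = e2.2.1 ∧
        ∀ y' ∈ e2.2.2, ∃ x' ∈ e1.2.2, F x' y'
  | _, _ => False

theorem OTrans_inr_inv {σ Q : Type*} {A : ABA σ Q} {e : Q × σ × Set Q} {a : σ}
    {z : QO σ Q} (h : OTrans A (Sum.inr e) a z) : z = Sum.inl e.1 := by
  cases h; rfl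

/-- `q` is related to `r` by the maximal backward simulation on `A` parametrised by
`≼_F` iff `q^⊙ ≼^I r^⊙` in the LTS `A^⊙` with the initial preorder `I`. -/
theorem stmt_19 [Finite σ] [Finite Q] (A : ABA σ Q) (hne : A.NoEmpty)
    (F : Q → Q → Prop) (hFr : Reflexive F) (hFt : Transitive F)
    (hF : ForwardSim A F) (q r : Q) :
    (∃ Bs, BackwardSim A F Bs ∧ Bs q r) ↔
      SimLE (OTrans A) (I0 A F) (Sum.inl q) (Sum.inl r) := by
  constructor
  · rintro ⟨B, hB, hqr⟩
    refine ⟨fun x y => match x, y with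
      | Sum.inl p, Sum.inl s => B p s
      | Sum.inr e1, Sum.inr e2 => e1.2.1 = e2.2.1 ∧ B e1.1 e2.1 ∧ IsEnv A e1 ∧ IsEnv A e2 ∧
          ∀ y' ∈ e2.2.2, ∃ x' ∈ e1.2.2, F x' y'
      | _, _ => False, ?_, ?_, hqr⟩
    · intro x y hxy a x' hx
      cases hx with
      | @state_to_env p a P p' hP hp' =>
        match y, hxy with
        | Sum.inl s, hBs =>
          obtain ⟨-, -, hstep⟩ := hB p' s hBs
          have hnp : p' ∉ P \ {p'} := fun h => h.2 rfl
          have hIns : insert p' (P \ {p'}) ∈ A.δ p a := by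
            rwa [Set.insert_diff_singleton, Set.insert_eq_self.mpr hp']
          obtain ⟨s0, R0, hsR0, hins, hBps0, hFR⟩ := hstep a p (P \ {p'}) hnp hIns
          refine ⟨Sum.inr (s0, a, R0), ?_, rfl, hBps0, ⟨P, p', hP, hp', rfl⟩,
            ⟨insert s R0, s, hins, Set.mem_insert _ _,
              (Set.insert_diff_self_of_notMem hsR0).symm⟩, hFR⟩
          have := OTrans.state_to_env (A := A) hins (Set.mem_insert s R0)
          rwa [Set.insert_diff_self_of_notMem hsR0] at this
      | @env_to_state p a P p' hP hp' =>
        match y, hxy with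
        | Sum.inr e2, ⟨hl, hB2, hE1, hE2, hFF⟩ =>
          obtain ⟨R0, s', hR0, hs', he⟩ := hE2
          refine ⟨Sum.inl e2.1, ?_, hB2⟩
          have t := OTrans.env_to_state (A := A) hR0 hs'
          rw [← he] at t
          rw [show a = e2.2.1 from hl]
          exact t
    · intro u v huv
      match u, v, huv with
      | Sum.inl p, Sum.inl s, huv => exact ⟨(hB _ _ huv).1, (hB _ _ huv).2.1⟩
      | Sum.inr e1, Sum.inr e2, huv => exact ⟨huv.2.2.1, huv.2.2.2.1, huv.1, huv.2.2.2.2⟩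
  · rintro ⟨R, hsim, hsub, hR⟩
    refine ⟨fun p s => SimLE (OTrans A) (I0 A F) (Sum.inl p) (Sum.inl s), ?_,
      R, hsim, hsub, hR⟩
    rintro p s ⟨R', hsim', hsub', hR'⟩
    have hI := hsub' _ _ hR'
    refine ⟨hI.1, hI.2, ?_⟩
    intro a q0 P hpP hins
    have t1 : OTrans A (Sum.inl p) a (Sum.inr (q0, a, P)) := by
      have := OTrans.state_to_env (A := A) hins (Set.mem_insert p P)
      rwa [Set.insert_diff_self_of_notMem hpP] at this
    obtain ⟨y, hy, hRy⟩ := hsim' _ _ hR' a _ t1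
    cases hy with
    | @state_to_env s0 _ R0 _ hR0 hsR0 =>
      have hFF := (hsub' _ _ hRy).2.2.2
      have t2 : OTrans A (Sum.inr (q0, a, P)) a (Sum.inl q0) := by
        have := OTrans.env_to_state (A := A) hins (Set.mem_insert p P)
        rwa [Set.insert_diff_self_of_notMem hpP] at this
      obtain ⟨z, hz, hRz⟩ := hsim' _ _ hRy a _ t2
      obtain rfl := OTrans_inr_inv hz
      refine ⟨s0, R0 \ {s}, fun h => h.2 rfl, ?_, ⟨R', hsim', hsub', hRz⟩, hFF⟩
      rwa [Set.insert_diff_singleton, Set.insert_eq_self.mpr hsR0]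
end
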